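/- Counterexample to a composed worst-case ordering (two-fold composed subsampled randomized response): let μ be the probability measure on {0,1} with μ({0}) = 3/4 and μ({1}) = 1/4, let ν be the uniform probability measure on {0,1}, and set P := μ ⊗ μ and Q := ν ⊗ ν on {0,1}². Then H_{4/3}(P ‖ Q) = 11/48, H_{4/3}(Q ‖ P) = 1/6, H_2(P ‖ Q) = 1/16, and H_2(Q ‖ P) = 1/8. In particular H_{4/3}(P ‖ Q) > H_{4/3}(Q ‖ P) while H_2(P ‖ Q) < H_2(Q ‖ P), so neither ordered pair dominates the other for all α ≥ 1. -/
import Mathlib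


open MeasureTheory ProbabilityTheory
open scoped ENNReal NNReal

/-- Hockey-stick divergence: `H_α(P ‖ Q) = sup_{E measurable} (P(E) − α·Q(E))`. -/
noncomputable def hsDiv {X : Type*} [MeasurableSpace X] (α : ℝ) (P Q : Measure X) : ℝ :=
  ⨆ E : {E : Set X // MeasurableSet E}, ((P E).toReal - α * (Q E).toReal)

/-- The randomized-response output distribution on `{0,1}` weighted `3/4` towards `0`. -/
noncomputable def rrMu : Measure (Fin 2) :=
  (3 / 4 : ℝ≥0∞) • Measure.dirac 0 + (1 / 4 : ℝ≥0∞) • Measure.dirac 1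

/-- The uniform distribution on `{0,1}`. -/
noncomputable def rrNu : Measure (Fin 2) :=
  (1 / 2 : ℝ≥0∞) • Measure.dirac 0 + (1 / 2 : ℝ≥0∞) • Measure.dirac 1

lemma measure_coe_finset {X : Type*} [MeasurableSpace X] [MeasurableSingletonClass X]
    (μ : Measure X) (s : Finset X) : μ ↑s = ∑ x ∈ s, μ {x} := by
  rw [← measure_biUnion_finset (f := fun x => ({x} : Set X))]
  · congr 1; ext x; simp
  · intro x _ y _ hxy
    simp [Function.onFun, Set.disjoint_singleton, hxy]
  · exact fun b _ => measurableSet_singleton b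

lemma hsDiv_fintype {X : Type*} [MeasurableSpace X] [MeasurableSingletonClass X] [Fintype X]
    (α : ℝ) (P Q : Measure X) [IsFiniteMeasure P] [IsFiniteMeasure Q] :
    hsDiv α P Q = ∑ x, max ((P {x}).toReal - α * (Q {x}).toReal) 0 := by
  classical
  set c : X → ℝ := fun x => (P {x}).toReal - α * (Q {x}).toReal with hc
  have key : ∀ E : Set X, (P E).toReal - α * (Q E).toReal = ∑ x ∈ E.toFinset, c x := by
    intro E
    have hP : P E = ∑ x ∈ E.toFinset, P {x} := by
      rw [← measure_coe_finset]; congr; simp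
    have hQ : Q E = ∑ x ∈ E.toFinset, Q {x} := by
      rw [← measure_coe_finset]; congr; simp
    rw [hP, hQ, ENNReal.toReal_sum (fun a _ => measure_ne_top P _),
      ENNReal.toReal_sum (fun a _ => measure_ne_top Q _), Finset.mul_sum,
      ← Finset.sum_sub_distrib]
  have hub : ∀ E : {E : Set X // MeasurableSet E},
      ((P E.1).toReal - α * (Q E.1).toReal) ≤ ∑ x, max (c x) 0 := by
    rintro ⟨E, -⟩
    rw [key E]
    calc ∑ x ∈ E.toFinset, c x ≤ ∑ x ∈ E.toFinset, max (c x) 0 :=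
          Finset.sum_le_sum fun x _ => le_max_left _ _
      _ ≤ ∑ x, max (c x) 0 :=
          Finset.sum_le_sum_of_subset_of_nonneg (Finset.subset_univ _)
            (fun x _ _ => le_max_right _ _)
  refine le_antisymm (ciSup_le hub) ?_
  have hmeas : MeasurableSet {x | 0 < c x} := (Set.toFinite _).measurableSet
  have := le_ciSup ⟨_, Set.forall_mem_range.2 hub⟩
    (⟨{x | 0 < c x}, hmeas⟩ : {E : Set X // MeasurableSet E})
  refine le_trans (le_of_eq ?_) this
  rw [key]
  rw [show (Finset.univ.sum fun x => max (c x) 0)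
      = ∑ x ∈ ({x | 0 < c x} : Set X).toFinset, max (c x) 0 from
    (Finset.sum_subset (Finset.subset_univ _) (by
      intro x _ hx
      simp only [Set.mem_toFinset, Set.mem_setOf_eq, not_lt] at hx
      exact max_eq_right hx)).symm]
  refine Finset.sum_congr rfl fun x hx => ?_
  simp only [Set.mem_toFinset, Set.mem_setOf_eq] at hx
  exact max_eq_left hx.le

instance : IsFiniteMeasure rrMu := by
  constructor
  simp [rrMu, Measure.dirac_apply]
  all_goals exact ENNReal.div_lt_top (by norm_num) (by norm_num)

instance : IsFiniteMeasure rrNu := by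
  constructor
  simp [rrNu, Measure.dirac_apply]
  all_goals exact ENNReal.div_lt_top (by norm_num) (by norm_num)

lemma rr_m0 : (rrMu {(0:Fin 2)}).toReal = 3/4 := by
  simp [rrMu, Measure.dirac_apply, ENNReal.toReal_div]

lemma rr_m1 : (rrMu {(1:Fin 2)}).toReal = 1/4 := by
  simp [rrMu, Measure.dirac_apply, ENNReal.toReal_div]

lemma rr_n0 : (rrNu {(0:Fin 2)}).toReal = 1/2 := by
  simp [rrNu, Measure.dirac_apply, ENNReal.toReal_div]

lemma rr_n1 : (rrNu {(1:Fin 2)}).toReal = 1/2 := by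
  simp [rrNu, Measure.dirac_apply, ENNReal.toReal_div]

/-- Counterexample to a composed worst-case ordering: for the two-fold composed subsampled
randomized response with `P = μ ⊗ μ` and `Q = ν ⊗ ν`, one has
`H_{4/3}(P‖Q) = 11/48 > 1/6 = H_{4/3}(Q‖P)` while `H_2(P‖Q) = 1/16 < 1/8 = H_2(Q‖P)`,
so neither ordered pair dominates the other for all `α ≥ 1`. -/
theorem rr_composed_no_worst_case_ordering :
    hsDiv (4 / 3) (rrMu.prod rrMu) (rrNu.prod rrNu) = 11 / 48 ∧
    hsDiv (4 / 3) (rrNu.prod rrNu) (rrMu.prod rrMu) = 1 / 6 ∧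
    hsDiv 2 (rrMu.prod rrMu) (rrNu.prod rrNu) = 1 / 16 ∧
    hsDiv 2 (rrNu.prod rrNu) (rrMu.prod rrMu) = 1 / 8 ∧
    hsDiv (4 / 3) (rrMu.prod rrMu) (rrNu.prod rrNu) >
      hsDiv (4 / 3) (rrNu.prod rrNu) (rrMu.prod rrMu) ∧
    hsDiv 2 (rrMu.prod rrMu) (rrNu.prod rrNu) <
      hsDiv 2 (rrNu.prod rrNu) (rrMu.prod rrMu) := by
  have h1 : hsDiv (4 / 3) (rrMu.prod rrMu) (rrNu.prod rrNu) = 11 / 48 := by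
    rw [hsDiv_fintype, Fintype.sum_prod_type]
    simp only [← Set.singleton_prod_singleton, Measure.prod_prod, ENNReal.toReal_mul,
      Fin.sum_univ_two, rr_m0, rr_m1, rr_n0, rr_n1]
    norm_num [max_def]
  have h2 : hsDiv (4 / 3) (rrNu.prod rrNu) (rrMu.prod rrMu) = 1 / 6 := by
    rw [hsDiv_fintype, Fintype.sum_prod_type]
    simp only [← Set.singleton_prod_singleton, Measure.prod_prod, ENNReal.toReal_mul,
      Fin.sum_univ_two, rr_m0, rr_m1, rr_n0, rr_n1]
    norm_num [max_def]
  have h3 : hsDiv 2 (rrMu.prod rrMu) (rrNu.prod rrNu) = 1 / 16 := by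
    rw [hsDiv_fintype, Fintype.sum_prod_type]
    simp only [← Set.singleton_prod_singleton, Measure.prod_prod, ENNReal.toReal_mul,
      Fin.sum_univ_two, rr_m0, rr_m1, rr_n0, rr_n1]
    norm_num [max_def]
  have h4 : hsDiv 2 (rrNu.prod rrNu) (rrMu.prod rrMu) = 1 / 8 := by
    rw [hsDiv_fintype, Fintype.sum_prod_type]
    simp only [← Set.singleton_prod_singleton, Measure.prod_prod, ENNReal.toReal_mul,
      Fin.sum_univ_two, rr_m0, rr_m1, rr_n0, rr_n1]
    norm_num [max_def]
  exact ⟨h1, h2, h3, h4, by rw [h1, h2]; norm_num, by rw [h3, h4]; norm_num⟩
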